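/- For every integer n ≥ 0, the finite sequence a_l = C_l · binom(n, 2l), for 0 ≤ l ≤ ⌊n/2⌋, is unimodal: there exists l* with 0 ≤ l* ≤ ⌊n/2⌋ such that a_l ≤ a_{l+1} for all l < l* and a_{l+1} ≤ a_l for all l* ≤ l < ⌊n/2⌋. (Here a_l/M_n is the fraction σ_l of Motzkin paths of length n that contain exactly 2l brackets.) -/
import Mathlib

private lemma catA (l : ℕ) : (l+2) * catalan (l+1) = 2*(2*l+1) * catalan l := by
  apply Nat.eq_of_mul_eq_mul_left (show 0 < l+1 by omega)
  have h1 := succ_mul_catalan_eq_centralBinom (l+1)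
  have h2 := succ_mul_catalan_eq_centralBinom l
  have h3 := Nat.succ_mul_centralBinom_succ l
  nlinarith [h1, h2, h3]

private lemma chB (n l : ℕ) :
    (2*l+2)*((2*l+1) * n.choose (2*l+2)) = (n-2*l)*((n-2*l-1) * n.choose (2*l)) := by
  have h1 := Nat.choose_succ_right_eq n (2*l+1)
  have h2 := Nat.choose_succ_right_eq n (2*l)
  have : n - (2*l+1) = n - 2*l - 1 := by omega
  calc (2*l+2)*((2*l+1) * n.choose (2*l+2))
      = (n.choose (2*l+1+1) * (2*l+1+1)) * (2*l+1) := by ring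
    _ = (n.choose (2*l+1) * (n - (2*l+1))) * (2*l+1) := by rw [h1]
    _ = (n.choose (2*l+1) * (2*l+1)) * (n - (2*l+1)) := by ring
    _ = (n.choose (2*l) * (n - 2*l)) * (n - (2*l+1)) := by rw [h2]
    _ = (n.choose (2*l) * (n - 2*l)) * (n - 2*l - 1) := by rw [this]
    _ = (n-2*l)*((n-2*l-1) * n.choose (2*l)) := by ring

private lemma keyid (n l : ℕ) :
    (l+1)*((l+2) * (catalan (l+1) * n.choose (2*(l+1)))) =
      (n-2*l)*((n-2*l-1) * (catalan l * n.choose (2*l))) := by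
  apply Nat.eq_of_mul_eq_mul_left (show 0 < 2*(2*l+1) by omega)
  have A := catA l
  have B := chB n l
  have h2 : 2*(l+1) = 2*l+2 := by ring
  calc 2*(2*l+1)*((l+1)*((l+2) * (catalan (l+1) * n.choose (2*(l+1)))))
      = (l+1)*((l+2)*catalan (l+1))*(2*(2*l+1)* n.choose (2*l+2)) := by rw [h2]; ring
    _ = (l+1)*(2*(2*l+1)*catalan l)*(2*(2*l+1)* n.choose (2*l+2)) := by rw [A]
    _ = catalan l * ((2*l+2)*((2*l+1) * n.choose (2*l+2))) * (2*(2*l+1)) := by ring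
    _ = catalan l * ((n-2*l)*((n-2*l-1) * n.choose (2*l))) * (2*(2*l+1)) := by rw [B]
    _ = 2*(2*l+1)*((n-2*l)*((n-2*l-1) * (catalan l * n.choose (2*l)))) := by ring

private lemma step (n l : ℕ)
    (h : catalan (l+1) * n.choose (2*(l+1)) ≤ catalan l * n.choose (2*l)) :
    catalan (l+2) * n.choose (2*(l+2)) ≤ catalan (l+1) * n.choose (2*(l+1)) := by
  set a0 := catalan l * n.choose (2*l)
  set a1 := catalan (l+1) * n.choose (2*(l+1))
  set a2 := catalan (l+2) * n.choose (2*(l+2))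
  have k0 : (l+1)*((l+2) * a1) = (n-2*l)*((n-2*l-1) * a0) := keyid n l
  have k1 : (l+2)*((l+3) * a2) = (n-2*(l+1))*((n-2*(l+1)-1) * a1) := by
    have := keyid n (l+1)
    convert this using 3 <;> omega
  have hN : (n-2*(l+1))*((n-2*(l+1)-1)) ≤ (n-2*l)*(n-2*l-1) :=
    Nat.mul_le_mul (by omega) (by omega)
  have h1 : (l+2)*((l+3) * a2) ≤ (l+2)*((l+3) * a1) := by
    calc (l+2)*((l+3) * a2) = (n-2*(l+1))*((n-2*(l+1)-1) * a1) := k1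
      _ = (n-2*(l+1))*((n-2*(l+1)-1)) * a1 := by ring
      _ ≤ (n-2*l)*(n-2*l-1) * a1 := Nat.mul_le_mul_right _ hN
      _ ≤ (n-2*l)*(n-2*l-1) * a0 := Nat.mul_le_mul_left _ h
      _ = (n-2*l)*((n-2*l-1) * a0) := by ring
      _ = (l+1)*((l+2) * a1) := k0.symm
      _ ≤ (l+2)*((l+3) * a1) := by nlinarith
  have := Nat.le_of_mul_le_mul_left h1 (by omega)
  exact Nat.le_of_mul_le_mul_left this (by omega)

/-- The finite sequence `a_l = C_l · binom(n, 2l)`, `0 ≤ l ≤ ⌊n/2⌋` — where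
`a_l/M_n` is the fraction of Motzkin paths of length `n` with exactly `2l`
brackets — is unimodal: it increases up to some `l*` and decreases afterwards. -/
theorem stmt16 (n : ℕ) :
    ∃ lstar : ℕ, lstar ≤ n / 2 ∧
      (∀ l : ℕ, l < lstar →
        catalan l * n.choose (2 * l) ≤ catalan (l + 1) * n.choose (2 * (l + 1))) ∧
      (∀ l : ℕ, lstar ≤ l → l < n / 2 →
        catalan (l + 1) * n.choose (2 * (l + 1)) ≤ catalan l * n.choose (2 * l)) := by
  classical
  have hP : catalan (n/2 + 1) * n.choose (2 * (n/2 + 1)) ≤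
      catalan (n/2) * n.choose (2 * (n/2)) := by
    have : n.choose (2 * (n/2 + 1)) = 0 := Nat.choose_eq_zero_of_lt (by omega)
    simp [this]
  have hex : ∃ l, catalan (l + 1) * n.choose (2 * (l + 1)) ≤
      catalan l * n.choose (2 * l) := ⟨n/2, hP⟩
  refine ⟨Nat.find hex, Nat.find_le hP, ?_, ?_⟩
  · intro l hl
    exact le_of_lt (lt_of_not_ge (Nat.find_min hex hl))
  · have mono : ∀ l, Nat.find hex ≤ l →
        catalan (l + 1) * n.choose (2 * (l + 1)) ≤ catalan l * n.choose (2 * l) := by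
      intro l hl
      induction l, hl using Nat.le_induction with
      | base => exact Nat.find_spec hex
      | succ m hm ih => exact step n m ih
    exact fun l hl _ => mono l hl
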